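/- Let a, b be elements of a unital C*-algebra A with C(b) > 0. Then there exists a unique ζ ∈ ℂ such that v((a + ζb) + λb)² ≥ v(a + ζb)² + |λ|²·C(b)² for all λ ∈ ℂ. -/

import Mathlib

/-!
Write `g ζ = v(a + ζ b)²`. For every state `φ`, the parallelogram law in `ℂ` applied to
`φ(x) ± λ φ(b)` together with `|φ(b)| ≥ C(b)` gives, after taking suprema,
`2 v(x)² + 2 |λ|² C(b)² ≤ v(x + λ b)² + v(x - λ b)²`, i.e. `g` is midpoint strongly convex.
Since `v` is 1-Lipschitz and `v(a + ζ b) ≥ |ζ| C(b) - v(a)`, `g` attains its minimum at some `ζ₀`;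
strong convexity then forces the quadratic growth `g (ζ₀ + λ) ≥ g ζ₀ + |λ|² C(b)²`, and applying
this growth in both directions shows that no other point can satisfy it.
-/

open scoped ComplexOrder

/-- A state on a unital C*-algebra: a positive linear functional with `φ 1 = 1` and norm 1. -/
def IsState (A : Type*) [CStarAlgebra A] (φ : A →L[ℂ] ℂ) : Prop :=
  (∀ a : A, 0 ≤ φ (star a * a)) ∧ φ 1 = 1 ∧ ‖φ‖ = 1

/-- The numerical radius `v(a) = sup {|φ(a)| : φ a state}`. -/
noncomputable def nr {A : Type*} [CStarAlgebra A] (a : A) : ℝ :=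
  sSup {r : ℝ | ∃ φ : A →L[ℂ] ℂ, IsState A φ ∧ r = ‖φ a‖}

/-- The numerical radius Crawford number `C(b) = inf {|φ(b)| : φ a state}`. -/
noncomputable def crawford {A : Type*} [CStarAlgebra A] (b : A) : ℝ :=
  sInf {r : ℝ | ∃ φ : A →L[ℂ] ℂ, IsState A φ ∧ r = ‖φ b‖}

/-- Numerical radius Birkhoff--James orthogonality: `v(a + λ b) ≥ v(a)` for all `λ ∈ ℂ`. -/
def nrOrth {A : Type*} [CStarAlgebra A] (a b : A) : Prop :=
  ∀ lam : ℂ, nr a ≤ nr (a + lam • b)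

/-- Birkhoff--James orthogonality: `‖a + λ b‖ ≥ ‖a‖` for all `λ ∈ ℂ`. -/
def bjOrth {A : Type*} [CStarAlgebra A] (a b : A) : Prop :=
  ∀ lam : ℂ, ‖a‖ ≤ ‖a + lam • b‖

open Filter Topology

section QuadraticGrowth

variable {E : Type*} [SeminormedAddCommGroup E] [NormedSpace ℝ E]

/-- The midpoint inequality at `x₀ + h/2` shows that halving `h` at most halves the defect
`D h = g (x₀ + h) - g x₀ - c ‖h‖²`, while minimality gives `D h ≥ -c ‖h‖²`; hence
`D h ≥ -c ‖h‖² / 2ⁿ` for every `n`. -/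
theorem add_mul_norm_sq_le_of_forall_le {g : E → ℝ} {c : ℝ} {x₀ : E}
    (hg : ∀ x h, 2 * g x + 2 * c * ‖h‖ ^ 2 ≤ g (x + h) + g (x - h))
    (hmin : ∀ x, g x₀ ≤ g x) (h : E) : g x₀ + c * ‖h‖ ^ 2 ≤ g (x₀ + h) := by
  set D : E → ℝ := fun h => g (x₀ + h) - g x₀ - c * ‖h‖ ^ 2
  have hnorm : ∀ h : E, ‖(2 : ℝ)⁻¹ • h‖ = ‖h‖ / 2 := fun h => by
    rw [norm_smul]; norm_num; ring
  have halve : ∀ h : E, 2 * D ((2 : ℝ)⁻¹ • h) ≤ D h := by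
    intro h
    have hmid := hg (x₀ + (2 : ℝ)⁻¹ • h) ((2 : ℝ)⁻¹ • h)
    rw [add_assoc, ← two_smul ℝ, smul_inv_smul₀ two_ne_zero, add_sub_cancel_right,
      hnorm] at hmid
    simp only [D, hnorm]
    linarith
  have bound : ∀ n : ℕ, ∀ h : E, -(c * ‖h‖ ^ 2) * (1 / 2) ^ n ≤ D h := by
    intro n
    induction n with
    | zero => intro h; simp only [D, pow_zero, mul_one]; linarith [hmin (x₀ + h)]
    | succ n ih =>
      intro h
      have := ih ((2 : ℝ)⁻¹ • h)
      rw [hnorm] at this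
      linarith [halve h, show -(c * (‖h‖ / 2) ^ 2) * (1 / 2) ^ n * 2
        = -(c * ‖h‖ ^ 2) * (1 / 2) ^ (n + 1) by ring]
  have hlim : Tendsto (fun n : ℕ => -(c * ‖h‖ ^ 2) * (1 / 2 : ℝ) ^ n) atTop (𝓝 0) := by
    simpa using (tendsto_pow_atTop_nhds_zero_of_lt_one (r := (1 / 2 : ℝ))
      (by norm_num) (by norm_num)).const_mul (-(c * ‖h‖ ^ 2))
  have hD : 0 ≤ D h := le_of_tendsto' hlim fun n => bound n h
  simp only [D] at hD
  linarith

end QuadraticGrowth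

section NumericalRadius

variable {A : Type*} [CStarAlgebra A]

theorem bddAbove_norm_apply_states (x : A) :
    BddAbove {r : ℝ | ∃ φ : A →L[ℂ] ℂ, IsState A φ ∧ r = ‖φ x‖} := by
  refine ⟨‖x‖, ?_⟩
  rintro r ⟨φ, hφ, rfl⟩
  simpa [hφ.2.2] using φ.le_opNorm x

theorem IsState.norm_apply_le_nr {φ : A →L[ℂ] ℂ} (hφ : IsState A φ) (x : A) :
    ‖φ x‖ ≤ nr x :=
  le_csSup (bddAbove_norm_apply_states x) ⟨φ, hφ, rfl⟩

theorem IsState.crawford_le_norm_apply {φ : A →L[ℂ] ℂ} (hφ : IsState A φ) (b : A) :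
    crawford b ≤ ‖φ b‖ :=
  csInf_le ⟨0, by rintro r ⟨ψ, -, rfl⟩; positivity⟩ ⟨φ, hφ, rfl⟩

theorem nr_nonneg (x : A) : 0 ≤ nr x :=
  Real.sSup_nonneg <| by rintro r ⟨φ, -, rfl⟩; positivity

theorem crawford_nonneg (b : A) : 0 ≤ crawford b :=
  Real.sInf_nonneg <| by rintro r ⟨φ, -, rfl⟩; positivity

theorem nr_le_of_forall {x : A} {M : ℝ} (hM : 0 ≤ M)
    (h : ∀ φ : A →L[ℂ] ℂ, IsState A φ → ‖φ x‖ ≤ M) : nr x ≤ M :=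
  Real.sSup_le (by rintro r ⟨φ, hφ, rfl⟩; exact h φ hφ) hM

theorem nr_sq_le_of_forall {x : A} {M : ℝ} (hA : ∃ φ : A →L[ℂ] ℂ, IsState A φ)
    (h : ∀ φ : A →L[ℂ] ℂ, IsState A φ → ‖φ x‖ ^ 2 ≤ M) : nr x ^ 2 ≤ M := by
  obtain ⟨φ₀, hφ₀⟩ := hA
  have hM : 0 ≤ M := (sq_nonneg _).trans (h φ₀ hφ₀)
  refine (Real.le_sqrt (nr_nonneg x) hM).1 (nr_le_of_forall (Real.sqrt_nonneg M) fun φ hφ => ?_)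
  exact (Real.le_sqrt (norm_nonneg _) hM).2 (h φ hφ)

theorem exists_isState_of_crawford_pos {b : A} (hb : 0 < crawford b) :
    ∃ φ : A →L[ℂ] ℂ, IsState A φ := by
  by_contra! h
  have hempty : {r : ℝ | ∃ φ : A →L[ℂ] ℂ, IsState A φ ∧ r = ‖φ b‖} = ∅ :=
    Set.eq_empty_of_forall_notMem fun r ⟨φ, hφ, _⟩ => h φ hφ
  rw [crawford, hempty, Real.sInf_empty] at hb
  exact hb.false

theorem lipschitzWith_one_nr : LipschitzWith 1 (nr : A → ℝ) := by
  refine LipschitzWith.of_le_add fun x y => ?_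
  refine nr_le_of_forall (add_nonneg (nr_nonneg y) dist_nonneg) fun φ hφ => ?_
  calc ‖φ x‖ = ‖φ y + φ (x - y)‖ := by rw [← map_add, add_sub_cancel]
    _ ≤ ‖φ y‖ + ‖φ (x - y)‖ := norm_add_le _ _
    _ ≤ nr y + dist x y := by
      gcongr
      · exact hφ.norm_apply_le_nr y
      · simpa [hφ.2.2, dist_eq_norm] using φ.le_opNorm (x - y)

theorem two_mul_nr_sq_add_le (hA : ∃ φ : A →L[ℂ] ℂ, IsState A φ) (x b : A) (lam : ℂ) :
    2 * nr x ^ 2 + 2 * crawford b ^ 2 * ‖lam‖ ^ 2 ≤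
      nr (x + lam • b) ^ 2 + nr (x - lam • b) ^ 2 := by
  suffices h : nr x ^ 2 ≤
      (nr (x + lam • b) ^ 2 + nr (x - lam • b) ^ 2) / 2 - crawford b ^ 2 * ‖lam‖ ^ 2 by
    linarith
  refine nr_sq_le_of_forall hA fun φ hφ => ?_
  have hpar := parallelogram_law_with_norm ℝ (φ x) (lam * φ b)
  have hplus : ‖φ x + lam * φ b‖ ^ 2 ≤ nr (x + lam • b) ^ 2 := by
    gcongr; simpa using hφ.norm_apply_le_nr (x + lam • b)
  have hminus : ‖φ x - lam * φ b‖ ^ 2 ≤ nr (x - lam • b) ^ 2 := by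
    gcongr; simpa using hφ.norm_apply_le_nr (x - lam • b)
  have hb : crawford b ^ 2 * ‖lam‖ ^ 2 ≤ ‖lam * φ b‖ ^ 2 := by
    rw [norm_mul, mul_pow, mul_comm]
    gcongr
    · exact crawford_nonneg b
    · exact hφ.crawford_le_norm_apply b
  linarith

theorem norm_mul_crawford_le_nr_add_smul (hA : ∃ φ : A →L[ℂ] ℂ, IsState A φ) (a b : A)
    (ζ : ℂ) : ‖ζ‖ * crawford b - nr a ≤ nr (a + ζ • b) := by
  obtain ⟨φ, hφ⟩ := hA
  calc ‖ζ‖ * crawford b - nr a ≤ ‖ζ * φ b‖ - ‖φ a‖ := by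
        rw [norm_mul]
        gcongr
        exacts [hφ.crawford_le_norm_apply b, hφ.norm_apply_le_nr a]
    _ ≤ ‖φ a + ζ * φ b‖ := by
        simpa [add_comm] using norm_sub_norm_le (ζ * φ b) (-φ a)
    _ ≤ nr (a + ζ • b) := by simpa using hφ.norm_apply_le_nr (a + ζ • b)

theorem exists_forall_nr_add_smul_le {b : A} (hb : 0 < crawford b) (a : A) :
    ∃ ζ₀ : ℂ, ∀ ζ : ℂ, nr (a + ζ₀ • b) ≤ nr (a + ζ • b) := by
  have hcont : Continuous fun ζ : ℂ => nr (a + ζ • b) :=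
    lipschitzWith_one_nr.continuous.comp (by fun_prop)
  have hcoercive : Tendsto (fun ζ : ℂ => nr (a + ζ • b)) (cocompact ℂ) atTop :=
    tendsto_atTop_mono (norm_mul_crawford_le_nr_add_smul (exists_isState_of_crawford_pos hb) a b)
      (tendsto_atTop_add_const_right _ _ (tendsto_norm_cocompact_atTop.atTop_mul_const hb))
  exact hcont.exists_forall_le hcoercive

end NumericalRadius

variable {A : Type*} [CStarAlgebra A]

theorem stmt16 (a b : A) (hb : 0 < crawford b) :
    ∃! ζ : ℂ, ∀ lam : ℂ,
      nr (a + ζ • b) ^ 2 + ‖lam‖ ^ 2 * crawford b ^ 2 ≤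
        nr ((a + ζ • b) + lam • b) ^ 2 := by
  have hshift : ∀ ζ lam : ℂ, a + ζ • b + lam • b = a + (ζ + lam) • b := by
    intro ζ lam; rw [add_smul, add_assoc]
  obtain ⟨ζ₀, hmin⟩ := exists_forall_nr_add_smul_le hb a
  have hgrowth : ∀ lam : ℂ,
      nr (a + ζ₀ • b) ^ 2 + ‖lam‖ ^ 2 * crawford b ^ 2 ≤ nr (a + ζ₀ • b + lam • b) ^ 2 := by
    intro lam
    rw [hshift, mul_comm]
    refine add_mul_norm_sq_le_of_forall_le (g := fun ζ => nr (a + ζ • b) ^ 2) (fun ζ h => ?_)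
      (fun ζ => pow_le_pow_left₀ (nr_nonneg _) (hmin ζ) 2) lam
    simpa [← hshift, sub_eq_add_neg, add_assoc] using
      two_mul_nr_sq_add_le (exists_isState_of_crawford_pos hb) (a + ζ • b) b h
  refine ⟨ζ₀, hgrowth, fun ζ hζ => ?_⟩
  have h₁ := hζ (ζ₀ - ζ)
  have h₂ := hgrowth (ζ - ζ₀)
  rw [hshift, add_sub_cancel, norm_sub_rev] at h₁
  rw [hshift, add_sub_cancel] at h₂
  have h₀ : ‖ζ - ζ₀‖ ^ 2 * crawford b ^ 2 = 0 := le_antisymm (by linarith) (by positivity)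
  simpa [hb.ne', sub_eq_zero] using h₀
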